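/- arXiv:math/0312078 — 2 statements merged into one kernel-verified Lean document; each statement's English description precedes it below -/
import Mathlib

section
/- Let C_1, ..., C_r be vectors in an inner-product-like real vector space with symmetric bilinear form ⟨·,·⟩ such that ⟨C_i, C_j⟩ ≥ 0 for i ≠ j and the Gram matrix is negative definite. If E = x_1 C_1 + ... + x_r C_r satisfies ⟨E, C_i⟩ ≤ 0 for all i, then x_i ≥ 0 for all i. -/
/-- A finite family of vectors is *negative definite* (for a symmetric bilinear
form `B`) if its Gram matrix `(B (C i) (C j))` is negative definite, i.e. its
negation is positive definite. -/
def NegDefFamily {V : Type*} [AddCommGroup V] [Module ℝ V]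
    (B : LinearMap.BilinForm ℝ V) {r : ℕ} (C : Fin r → V) : Prop :=
  (-(Matrix.of fun i j => B (C i) (C j))).PosDef

/-!
Write `x = x⁺ - x⁻`, `P = ∑ x⁺ i • C i` and `N = ∑ x⁻ i • C i`, so that `E = P - N` and
`B N N = B P N - B E N`. Here `B E N ≤ 0` since `x⁻ ≥ 0`, and `B P N ≥ 0` since `x⁺ i * x⁻ i = 0`
kills the diagonal terms while the off-diagonal ones are nonnegative. So `B N N ≥ 0`, and negative
definiteness forces `x⁻ = 0`.
-/

theorem posPart_mul_negPart_eq_zero {α : Type*} [Ring α] [LinearOrder α] [IsOrderedRing α]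
    (a : α) : a⁺ * a⁻ = 0 := by
  rcases le_total 0 a with ha | ha
  · rw [negPart_eq_zero.mpr ha, mul_zero]
  · rw [posPart_eq_zero.mpr ha, zero_mul]

namespace LinearMap.BilinForm

variable {R M ι : Type*} [CommSemiring R] [AddCommMonoid M] [Module R M] [Fintype ι]

theorem sum_smul_apply_sum_smul (B : LinearMap.BilinForm R M) (v : ι → M) (a b : ι → R) :
    B (∑ i, a i • v i) (∑ j, b j • v j) = ∑ i, ∑ j, a i * b j * B (v i) (v j) := by
  simp only [map_sum, map_smul, LinearMap.sum_apply, LinearMap.smul_apply, smul_eq_mul,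
    Finset.mul_sum]
  rw [Finset.sum_comm]
  refine Finset.sum_congr rfl fun i _ => Finset.sum_congr rfl fun j _ => ?_
  ring

theorem sum_smul_apply_sum_smul_nonneg {V : Type*} [AddCommGroup V] [Module ℝ V]
    (B : LinearMap.BilinForm ℝ V) {v : ι → V} (hoff : ∀ i j, i ≠ j → 0 ≤ B (v i) (v j))
    {a b : ι → ℝ} (ha : 0 ≤ a) (hb : 0 ≤ b) (hab : ∀ i, a i * b i = 0) :
    0 ≤ B (∑ i, a i • v i) (∑ j, b j • v j) := by
  rw [sum_smul_apply_sum_smul]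
  refine Finset.sum_nonneg fun i _ => Finset.sum_nonneg fun j _ => ?_
  rcases eq_or_ne i j with rfl | hij
  · rw [hab i, zero_mul]
  · exact mul_nonneg (mul_nonneg (ha i) (hb j)) (hoff i j hij)

end LinearMap.BilinForm

theorem NegDefFamily.eq_zero_of_nonneg_apply {V : Type*} [AddCommGroup V] [Module ℝ V]
    {B : LinearMap.BilinForm ℝ V} {r : ℕ} {C : Fin r → V} (hneg : NegDefFamily B C)
    {c : Fin r → ℝ} (hc : 0 ≤ B (∑ i, c i • C i) (∑ i, c i • C i)) : c = 0 := by
  by_contra hne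
  have hpos := hneg.dotProduct_mulVec_pos hne
  have hgram : star c ⬝ᵥ (-(Matrix.of fun i j => B (C i) (C j))).mulVec c =
      -B (∑ i, c i • C i) (∑ i, c i • C i) := by
    simp only [LinearMap.BilinForm.sum_smul_apply_sum_smul, dotProduct, Matrix.mulVec,
      Finset.mul_sum, ← Finset.sum_neg_distrib]
    refine Finset.sum_congr rfl fun i _ => Finset.sum_congr rfl fun j _ => ?_
    simp only [Pi.star_apply, star_trivial, Matrix.neg_apply, Matrix.of_apply, neg_mul, mul_neg,
      neg_inj]
    ring
  linarith

theorem stmt4_general {V : Type*} [AddCommGroup V] [Module ℝ V]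
    (B : LinearMap.BilinForm ℝ V)
    {r : ℕ} (C : Fin r → V)
    (hoff : ∀ i j : Fin r, i ≠ j → 0 ≤ B (C i) (C j))
    (hneg : NegDefFamily B C)
    (x : Fin r → ℝ) (E : V) (hE : E = ∑ i, x i • C i)
    (hEC : ∀ i : Fin r, B E (C i) ≤ 0) :
    ∀ i : Fin r, 0 ≤ x i := by
  set P := ∑ i, x⁺ i • C i
  set N := ∑ i, x⁻ i • C i
  have hE' : E = P - N := by
    rw [hE, ← Finset.sum_sub_distrib]
    refine Finset.sum_congr rfl fun i _ => ?_
    rw [← sub_smul, ← Pi.sub_apply, posPart_sub_negPart]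
  have hEN : B E N ≤ 0 := by
    simp only [N, map_sum, map_smul, smul_eq_mul]
    exact Finset.sum_nonpos fun j _ => mul_nonpos_of_nonneg_of_nonpos (negPart_nonneg _) (hEC j)
  have hPN : 0 ≤ B P N := LinearMap.BilinForm.sum_smul_apply_sum_smul_nonneg B hoff
    (posPart_nonneg x) (negPart_nonneg x) fun i => posPart_mul_negPart_eq_zero (x i)
  have hNN : 0 ≤ B N N := by
    have hsplit : B N N = B P N - B E N := by
      rw [hE', map_sub, LinearMap.sub_apply, sub_sub_cancel]
    linarith
  have hx : x⁻ = 0 := hneg.eq_zero_of_nonneg_apply hNN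
  intro i
  rw [← posPart_sub_negPart x, hx, sub_zero]
  exact posPart_nonneg x i

/-- If `B (C i) (C j) ≥ 0` for `i ≠ j`, the Gram matrix of the `C i` is negative
definite, and `E = ∑ x i • C i` satisfies `B E (C i) ≤ 0` for all `i`, then all
coefficients `x i` are nonnegative. -/
theorem stmt4 {V : Type*} [AddCommGroup V] [Module ℝ V]
    (B : LinearMap.BilinForm ℝ V) (hB : ∀ u v : V, B u v = B v u)
    {r : ℕ} (C : Fin r → V)
    (hoff : ∀ i j : Fin r, i ≠ j → 0 ≤ B (C i) (C j))
    (hneg : NegDefFamily B C)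
    (x : Fin r → ℝ) (E : V) (hE : E = ∑ i, x i • C i)
    (hEC : ∀ i : Fin r, B E (C i) ≤ 0) :
    ∀ i : Fin r, 0 ≤ x i :=
  stmt4_general B C hoff hneg x E hE hEC
end

section
/- Let C_1, ..., C_r be vectors in a real vector space with symmetric bilinear form such that ⟨C_i, C_j⟩ ≥ 0 for i ≠ j and the Gram matrix is negative definite. If E = x_1 C_1 + ... + x_r C_r satisfies ⟨E, C_i⟩ < 0 for all i, then x_i > 0 for all i. -/
/-! Split `x = x⁺ - x⁻`. Since the off-diagonal entries of `M` are nonnegative and `x⁺`, `x⁻`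
have disjoint supports, `x⁺ ⬝ M x⁻ ≥ 0`; since `x M ≤ 0`, `x ⬝ M x⁻ ≤ 0`. Subtracting,
`x⁻ ⬝ M x⁻ ≥ 0`, so `x⁻ = 0` by negative definiteness. Once `x ≥ 0`, the `i`-th entry of `x M`
can only be negative if `x i ≠ 0`. -/

namespace Matrix

variable {n : Type*} [Fintype n]

lemma dotProduct_mulVec_nonneg_of_offDiag_nonneg {M : Matrix n n ℝ}
    (hoff : ∀ i j, i ≠ j → 0 ≤ M i j) {p u : n → ℝ} (hp : 0 ≤ p) (hu : 0 ≤ u)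
    (hpu : ∀ i, p i * u i = 0) : 0 ≤ p ⬝ᵥ (M *ᵥ u) := by
  refine Finset.sum_nonneg fun i _ => ?_
  rw [mulVec, dotProduct, Finset.mul_sum]
  refine Finset.sum_nonneg fun j _ => ?_
  rcases eq_or_ne i j with rfl | hij
  · rw [mul_left_comm, hpu i, mul_zero]
  · exact mul_nonneg (hp i) (mul_nonneg (hoff i j hij) (hu j))

lemma nonneg_of_vecMul_nonpos {M : Matrix n n ℝ} (hM : (-M).PosDef)
    (hoff : ∀ i j, i ≠ j → 0 ≤ M i j) {x : n → ℝ} (hx : x ᵥ* M ≤ 0) : 0 ≤ x := by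
  have hquad : 0 ≤ x⁻ ⬝ᵥ (M *ᵥ x⁻) := by
    have hneg : x ᵥ* M ⬝ᵥ x⁻ ≤ 0 := by
      simpa [neg_dotProduct] using dotProduct_nonneg_of_nonneg (neg_nonneg.2 hx) (negPart_nonneg x)
    have hdisj (i : n) : x⁺ i * x⁻ i = 0 := by
      rcases le_total (x i) 0 with h | h
      · rw [Pi.posPart_apply, posPart_eq_zero.2 h, zero_mul]
      · rw [Pi.negPart_apply, negPart_eq_zero.2 h, mul_zero]
    have hcross : 0 ≤ x⁺ ⬝ᵥ (M *ᵥ x⁻) :=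
      dotProduct_mulVec_nonneg_of_offDiag_nonneg hoff (posPart_nonneg x) (negPart_nonneg x) hdisj
    have hsplit : x ᵥ* M ⬝ᵥ x⁻ = x⁺ ⬝ᵥ (M *ᵥ x⁻) - x⁻ ⬝ᵥ (M *ᵥ x⁻) := by
      rw [← dotProduct_mulVec, ← sub_dotProduct, posPart_sub_negPart]
    linarith
  have hx0 : x⁻ = 0 := by
    by_contra hne
    have := hM.dotProduct_mulVec_pos hne
    simp only [star_trivial, neg_mulVec, dotProduct_neg, Left.neg_pos_iff] at this
    linarith
  exact negPart_eq_zero.1 hx0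

lemma pos_of_vecMul_apply_neg {M : Matrix n n ℝ} (hoff : ∀ i j, i ≠ j → 0 ≤ M i j)
    {x : n → ℝ} (hx : 0 ≤ x) {i : n} (hi : (x ᵥ* M) i < 0) : 0 < x i := by
  by_contra hxi
  replace hxi : x i = 0 := le_antisymm (not_lt.1 hxi) (hx i)
  refine hi.not_ge (Finset.sum_nonneg fun j _ => ?_)
  rcases eq_or_ne j i with rfl | hji
  · rw [hxi, zero_mul]
  · exact mul_nonneg (hx j) (hoff j i hji)

lemma pos_of_vecMul_neg {M : Matrix n n ℝ} (hM : (-M).PosDef)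
    (hoff : ∀ i j, i ≠ j → 0 ≤ M i j) {x : n → ℝ} (hx : ∀ i, (x ᵥ* M) i < 0) (i : n) :
    0 < x i :=
  pos_of_vecMul_apply_neg hoff (nonneg_of_vecMul_nonpos hM hoff fun j => (hx j).le) (hx i)

end Matrix

lemma LinearMap.BilinForm.sum_smul_apply_eq_vecMul {R V : Type*} [CommSemiring R]
    [AddCommMonoid V] [Module R V] (B : LinearMap.BilinForm R V) {n : Type*} [Fintype n]
    (C : n → V) (x : n → R) (j : n) :
    B (∑ i, x i • C i) (C j) = Matrix.vecMul x (Matrix.of fun i j => B (C i) (C j)) j := by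
  simp [Matrix.vecMul, dotProduct]

theorem stmt5_general {V : Type*} [AddCommGroup V] [Module ℝ V]
    (B : LinearMap.BilinForm ℝ V)
    {r : ℕ} (C : Fin r → V)
    (hoff : ∀ i j : Fin r, i ≠ j → 0 ≤ B (C i) (C j))
    (hneg : NegDefFamily B C)
    (x : Fin r → ℝ) (E : V) (hE : E = ∑ i, x i • C i)
    (hEC : ∀ i : Fin r, B E (C i) < 0) :
    ∀ i : Fin r, 0 < x i :=
  Matrix.pos_of_vecMul_neg hneg hoff fun i => by
    rw [← B.sum_smul_apply_eq_vecMul, ← hE]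
    exact hEC i

/-- Strict version: if `B (C i) (C j) ≥ 0` for `i ≠ j`, the Gram matrix of the
`C i` is negative definite, and `E = ∑ x i • C i` satisfies `B E (C i) < 0` for
all `i`, then all coefficients `x i` are positive. -/
theorem stmt5 {V : Type*} [AddCommGroup V] [Module ℝ V]
    (B : LinearMap.BilinForm ℝ V) (hB : ∀ u v : V, B u v = B v u)
    {r : ℕ} (C : Fin r → V)
    (hoff : ∀ i j : Fin r, i ≠ j → 0 ≤ B (C i) (C j))
    (hneg : NegDefFamily B C)
    (x : Fin r → ℝ) (E : V) (hE : E = ∑ i, x i • C i)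
    (hEC : ∀ i : Fin r, B E (C i) < 0) :
    ∀ i : Fin r, 0 < x i :=
  stmt5_general B C hoff hneg x E hE hEC
end
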